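/- arXiv:1906.12180 — 12 statements merged into one kernel-verified Lean document; each statement's English description precedes it below -/
import Mathlib

section
/- If p and q are integers with 7q² + 59p² = 3^ω for some natural number ω, then 7·A(p,q)² + 59·B(p,q)² = 3^(2ω+5). -/
def A (p q : ℤ) : ℤ := 59*p^2 - 236*p*q - 7*q^2
def B (p q : ℤ) : ℤ := -118*p^2 - 14*p*q + 14*q^2

theorem stmt1 (p q : ℤ) (ω : ℕ) (h : 7*q^2 + 59*p^2 = 3^ω) :
    7 * (A p q)^2 + 59 * (B p q)^2 = 3^(2*ω + 5) := by
  have key : 7 * (A p q)^2 + 59 * (B p q)^2 = 243 * (7*q^2 + 59*p^2)^2 := by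
    simp only [A, B]; ring
  rw [key, h]
  rw [show 2*ω+5 = ω*2+5 by ring, pow_add, pow_mul]
  ring
end

section
/- If p and q are nonzero integers, then A(p,q) ≠ 0 and B(p,q) ≠ 0. -/
lemma key (d x y : ℤ) (hd : ¬ IsSquare d) (hy : y ≠ 0) (h : x^2 = d * y^2) : False := by
  apply hd
  rw [← Rat.isSquare_intCast_iff]
  refine ⟨(x : ℚ) / (y : ℚ), ?_⟩
  have hy' : (y : ℚ) ≠ 0 := Int.cast_ne_zero.mpr hy
  have hc : (x:ℚ)^2 = (d:ℚ) * (y:ℚ)^2 := by exact_mod_cast h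
  field_simp
  linarith [hc]

theorem stmt2 (p q : ℤ) (hp : p ≠ 0) (hq : q ≠ 0) :
    A p q ≠ 0 ∧ B p q ≠ 0 := by
  constructor
  · intro hA
    unfold A at hA
    have h : (59*p - 118*q)^2 = 14337 * q^2 := by linear_combination 59 * hA
    exact key 14337 _ q (by rw [show (14337:ℤ) = ((14337:ℕ):ℤ) by norm_num, Int.isSquare_natCast_iff]; rintro ⟨r, hr⟩; rcases le_or_gt r 119 with h | h <;> nlinarith) hq h
  · intro hB
    unfold B at hB
    have h : (14*q - 7*p)^2 = 1701 * p^2 := by linear_combination 14 * hB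
    exact key 1701 _ p (by rw [show (1701:ℤ) = ((1701:ℕ):ℤ) by norm_num, Int.isSquare_natCast_iff]; rintro ⟨r, hr⟩; rcases le_or_gt r 41 with h | h <;> nlinarith) hp h
end

section
/- Let u, v be nonzero integers and m an integer with m ≥ 15. Suppose 7u² + 59v² = 3^m, 3 divides u, and 2u + v = 3⁵·λ for some nonzero integer λ not divisible by 3. Then gcd(u, v) = 3⁵. -/
/-!
Substituting `v = 3⁵λ - 2u` turns `7u² + 59v² = 3^m` into
`u (u - 236λ) + 59·3⁵λ² = 3^(m-5)`, so `3⁵ ∣ u (u - 236λ)`. As `3 ∣ u` and `3 ∤ 236λ`,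
the factor `u - 236λ` is prime to `3`, hence `3⁵ ∣ u`, and then `3⁵ ∣ v`. Conversely
`gcd(u, v)` divides `3^m`, so it is prime to `λ`, and it divides `2u + v = 3⁵λ`;
hence it divides `3⁵`.
-/

theorem Irreducible.pow_dvd_of_pow_dvd_mul_sub {R : Type*} [CommRing R] [IsBezout R]
    {p u c : R} (hp : Irreducible p) (hpu : p ∣ u) (hpc : ¬ p ∣ c) {n : ℕ}
    (h : p ^ n ∣ u * (u - c)) : p ^ n ∣ u := by
  have hpuc : ¬ p ∣ u - c := fun hd ↦ hpc (by simpa using dvd_sub hpu hd)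
  exact (hp.coprime_pow_of_not_dvd n hpuc).symm.dvd_of_dvd_mul_right h

theorem seven_mul_sq_add_fiftynine_mul_sq_of_two_mul_add_eq (u v l : ℤ)
    (hlam : 2 * u + v = 3 ^ 5 * l) :
    7 * u ^ 2 + 59 * v ^ 2 = 3 ^ 5 * (u * (u - 236 * l) + 59 * 3 ^ 5 * l ^ 2) := by
  obtain rfl : v = 3 ^ 5 * l - 2 * u := by linarith
  ring

theorem three_pow_five_dvd_of_seven_mul_sq_add_fiftynine_mul_sq_eq {u v l : ℤ} {m : ℕ}
    (hm : 10 ≤ m) (h : 7 * u ^ 2 + 59 * v ^ 2 = 3 ^ m) (h3u : 3 ∣ u) (hl3 : ¬ 3 ∣ l)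
    (hlam : 2 * u + v = 3 ^ 5 * l) :
    3 ^ 5 ∣ u := by
  have hreduced : u * (u - 236 * l) + 59 * 3 ^ 5 * l ^ 2 = 3 ^ (m - 5) := by
    have hm5 : (3 : ℤ) ^ m = 3 ^ 5 * 3 ^ (m - 5) := by rw [← pow_add]; congr 1; omega
    rw [seven_mul_sq_add_fiftynine_mul_sq_of_two_mul_add_eq u v l hlam, hm5] at h
    exact mul_left_cancel₀ (by norm_num) h
  have hdvd : (3 : ℤ) ^ 5 ∣ u * (u - 236 * l) := by
    rw [eq_sub_of_add_eq hreduced]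
    exact dvd_sub (pow_dvd_pow 3 (by omega)) (dvd_mul_of_dvd_left (dvd_mul_left _ _) _)
  have h3l : ¬ (3 : ℤ) ∣ 236 * l := by
    rw [Int.prime_three.dvd_mul]
    rintro (h236 | h3l)
    · norm_num at h236
    · exact hl3 h3l
  exact Int.prime_three.irreducible.pow_dvd_of_pow_dvd_mul_sub h3u h3l hdvd

theorem stmt3_general (u v : ℤ) (m : ℕ) (hm : 15 ≤ m)
    (h : 7*u^2 + 59*v^2 = 3^m) (h3u : (3 : ℤ) ∣ u)
    (l : ℤ) (hl3 : ¬ (3 : ℤ) ∣ l) (hlam : 2*u + v = 3^5 * l) :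
    Int.gcd u v = 3^5 := by
  have hu5 : (3 : ℤ) ^ 5 ∣ u :=
    three_pow_five_dvd_of_seven_mul_sq_add_fiftynine_mul_sq_eq (by omega) h h3u hl3 hlam
  have hv5 : (3 : ℤ) ^ 5 ∣ v := by
    rw [eq_sub_of_add_eq' hlam]
    exact dvd_sub (dvd_mul_right _ _) (dvd_mul_of_dvd_right hu5 _)
  set d : ℤ := (Int.gcd u v : ℤ)
  have hd_pow : d ∣ 3 ^ m := h ▸ dvd_add
    (dvd_mul_of_dvd_right (dvd_pow (Int.gcd_dvd_left u v) two_ne_zero) _)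
    (dvd_mul_of_dvd_right (dvd_pow (Int.gcd_dvd_right u v) two_ne_zero) _)
  have hd_coprime : IsCoprime d l :=
    (Int.prime_three.irreducible.coprime_pow_of_not_dvd m hl3).symm.of_isCoprime_of_dvd_left hd_pow
  have hd_dvd : d ∣ 3 ^ 5 :=
    hd_coprime.dvd_of_dvd_mul_right <| hlam ▸
      dvd_add (dvd_mul_of_dvd_right (Int.gcd_dvd_left u v) _) (Int.gcd_dvd_right u v)
  have hdvd_d : (3 : ℤ) ^ 5 ∣ d := Int.dvd_coe_gcd hu5 hv5
  have hd_eq : d = 3 ^ 5 := Int.dvd_antisymm (by positivity) (by positivity) hd_dvd hdvd_d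
  rw [← Nat.cast_inj (R := ℤ)]
  exact hd_eq

theorem stmt3 (u v : ℤ) (hu : u ≠ 0) (hv : v ≠ 0) (m : ℕ) (hm : 15 ≤ m)
    (h : 7*u^2 + 59*v^2 = 3^m) (h3u : (3 : ℤ) ∣ u)
    (l : ℤ) (hl : l ≠ 0) (hl3 : ¬ (3 : ℤ) ∣ l) (hlam : 2*u + v = 3^5 * l) :
    Int.gcd u v = 3^5 :=
  stmt3_general u v m hm h h3u l hl3 hlam
end

section
/- Let (q, p, ω) be a primitive solution of 7x² + 59y² = 3^m (i.e. 7q² + 59p² = 3^ω with gcd(p,q) = 1, p, q nonzero, ω ≥ 5), with pq ≡ −1 (mod 3). Then gcd(A(p,q), B(p,q)) = 3⁵. -/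
theorem Int.isCoprime_of_mul_modEq_neg_one {a b n : ℤ} (h : a * b ≡ -1 [ZMOD n]) :
    IsCoprime a n := by
  obtain ⟨k, hk⟩ := h.dvd
  exact ⟨-b, -k, by linear_combination hk⟩

section

variable {p q : ℤ}

theorem A_eq_neg_sub (p q : ℤ) : A p q = -(7*q^2 + 59*p^2) - 118*p*(2*q - p) := by
  unfold A; ring

theorem A_eq_sub (p q : ℤ) : A p q = (7*q^2 + 59*p^2) - 2*q*(118*p + 7*q) := by
  unfold A; ring

theorem two_mul_A_add_B (p q : ℤ) : 2 * A p q + B p q = -486 * p * q := by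
  unfold A B; ring

theorem isCoprime_two_mul_add_three (hmod : p * q ≡ -1 [ZMOD 3]) : IsCoprime (2*q + p) 3 := by
  have hp2 : p ^ 2 ≡ 1 [ZMOD 3] :=
    Int.ModEq.pow_card_sub_one_eq_one Nat.prime_three (Int.isCoprime_of_mul_modEq_neg_one hmod)
  refine Int.isCoprime_of_mul_modEq_neg_one (b := p) ?_
  calc (2*q + p) * p = 2 * (p * q) + p ^ 2 := by ring
    _ ≡ 2 * (-1) + 1 [ZMOD 3] := (hmod.mul_left 2).add hp2
    _ = -1 := by norm_num

theorem three_pow_five_dvd_two_mul_sub (hN : (3:ℤ)^5 ∣ 7*q^2 + 59*p^2)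
    (h3 : IsCoprime (2*q + p) 3) : (3:ℤ)^5 ∣ 2*q - p := by
  have hprod : (3:ℤ)^5 ∣ 7*(2*q + p) * (2*q - p) := by
    have hid : 7*(2*q + p) * (2*q - p) = 4*(7*q^2 + 59*p^2) - 3^5*p^2 := by ring
    rw [hid]
    exact (hN.mul_left 4).sub (dvd_mul_right _ _)
  have h37 : IsCoprime (3:ℤ) 7 := by norm_num [Int.isCoprime_iff_gcd_eq_one]
  exact ((h37.mul_right h3.symm).pow_left).dvd_of_dvd_mul_left hprod

theorem three_pow_five_dvd_A (hN : (3:ℤ)^5 ∣ 7*q^2 + 59*p^2) (h : (3:ℤ)^5 ∣ 2*q - p) :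
    (3:ℤ)^5 ∣ A p q := by
  rw [A_eq_neg_sub]
  exact hN.neg_right.sub (h.mul_left _)

theorem three_pow_five_dvd_B (hA : (3:ℤ)^5 ∣ A p q) : (3:ℤ)^5 ∣ B p q := by
  have hB : B p q = 3^5 * (-2 * p * q) - 2 * A p q := by linear_combination two_mul_A_add_B p q
  rw [hB]
  exact (dvd_mul_right _ _).sub (hA.mul_left 2)

theorem isCoprime_A_of_isCoprime (h : IsCoprime (7*q^2 + 59*p^2) (2*q*p)) :
    IsCoprime (A p q) (2*q*p) := by
  refine IsCoprime.mul_right ?_ ?_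
  · rw [A_eq_sub, sub_eq_add_neg, ← mul_neg]
    exact h.of_mul_right_left.add_mul_left_left _
  · rw [A_eq_neg_sub, sub_eq_add_neg, show -(118*p*(2*q - p)) = p * (118*(p - 2*q)) by ring]
    exact h.of_mul_right_right.neg_left.add_mul_left_left _

theorem gcd_A_B_dvd (h : IsCoprime (A p q) (2*q*p)) : Int.gcd (A p q) (B p q) ∣ 3^5 := by
  have hdA : (Int.gcd (A p q) (B p q) : ℤ) ∣ A p q := Int.gcd_dvd_left _ _
  have hd : (Int.gcd (A p q) (B p q) : ℤ) ∣ 3^5 * -(2*q*p) := by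
    have h486 : 3^5 * -(2*q*p) = 2 * A p q + B p q := by linear_combination -two_mul_A_add_B p q
    rw [h486]
    exact (hdA.mul_left 2).add (Int.gcd_dvd_right _ _)
  exact_mod_cast (h.of_isCoprime_of_dvd_left hdA).neg_right.dvd_of_dvd_mul_right hd

end

theorem stmt4_general (p q : ℤ)
    (ω : ℕ) (hω : 5 ≤ ω) (h : 7*q^2 + 59*p^2 = 3^ω)
    (hmod : p * q ≡ -1 [ZMOD 3]) :
    Int.gcd (A p q) (B p q) = 3^5 := by
  have hp3 : IsCoprime p 3 := Int.isCoprime_of_mul_modEq_neg_one hmod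
  have hq3 : IsCoprime q 3 := Int.isCoprime_of_mul_modEq_neg_one (b := p) (by rwa [mul_comm])
  have h32 : IsCoprime (3:ℤ) 2 := by norm_num [Int.isCoprime_iff_gcd_eq_one]
  have hN : (3:ℤ)^5 ∣ 7*q^2 + 59*p^2 := h ▸ pow_dvd_pow 3 hω
  have hA : (3:ℤ)^5 ∣ A p q :=
    three_pow_five_dvd_A hN (three_pow_five_dvd_two_mul_sub hN (isCoprime_two_mul_add_three hmod))
  have hNcop : IsCoprime (7*q^2 + 59*p^2) (2*q*p) :=
    h ▸ ((h32.mul_right hq3.symm).mul_right hp3.symm).pow_left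
  apply Nat.dvd_antisymm (gcd_A_B_dvd (isCoprime_A_of_isCoprime hNcop))
  exact_mod_cast Int.dvd_coe_gcd hA (three_pow_five_dvd_B hA)

theorem stmt4 (p q : ℤ) (hp : p ≠ 0) (hq : q ≠ 0) (hcop : Int.gcd p q = 1)
    (ω : ℕ) (hω : 5 ≤ ω) (h : 7*q^2 + 59*p^2 = 3^ω)
    (hmod : p * q ≡ -1 [ZMOD 3]) :
    Int.gcd (A p q) (B p q) = 3^5 :=
  stmt4_general p q ω hω h hmod
end

section
/- Suppose p, q are nonzero coprime integers with 7q² + 59p² = 3^ω for some ω > 0 and pq ≡ −1 (mod 3). Let x' = |A(−p,q)| and y' = |B(−p,q)|. Then x' and y' are coprime positive integers satisfying 7x'² + 59y'² = 3^(2ω+5), and 3 does not divide x'. -/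
/-!
The forms satisfy the polynomial identity `7 A² + 59 B² = 3⁵ (7q² + 59p²)²`, which gives the
equation. Modulo 3 both `A(-p, q)` and `B(-p, q)` reduce to `2` when `pq ≡ -1`, so they are
nonzero and `3 ∤ x'`; a common divisor of `x'` and `y'` then divides a power of `3` while being
prime to `3`.
-/

theorem seven_mul_A_sq_add_fiftynine_mul_B_sq (p q : ℤ) :
    7 * A p q ^ 2 + 59 * B p q ^ 2 = 3 ^ 5 * (7 * q ^ 2 + 59 * p ^ 2) ^ 2 := by
  simp only [A, B]
  ring

theorem A_modEq_two_and_B_modEq_two {p q : ℤ} (h : p * q ≡ 1 [ZMOD 3]) :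
    A p q ≡ 2 [ZMOD 3] ∧ B p q ≡ 2 [ZMOD 3] := by
  have hcast (a b : ℤ) : a ≡ b [ZMOD 3] ↔ (a : ZMod 3) = b :=
    (ZMod.intCast_eq_intCast_iff a b 3).symm
  simp only [hcast, A, B] at h ⊢
  push_cast at h ⊢
  generalize (p : ZMod 3) = P, (q : ZMod 3) = Q at h ⊢
  revert P Q
  decide

theorem IsCoprime.of_mul_sq_add_mul_sq_eq_pow {R : Type*} [CommRing R] {x y ℓ a b : R} {n : ℕ}
    (hx : IsCoprime x ℓ) (h : a * x ^ 2 + b * y ^ 2 = ℓ ^ n) : IsCoprime x y := by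
  have hby : IsCoprime x (b * y ^ 2 + x * (a * x)) := by
    rw [show b * y ^ 2 + x * (a * x) = ℓ ^ n by rw [← h]; ring]
    exact hx.pow_right
  exact (IsCoprime.pow_right_iff two_pos).1 hby.of_add_mul_left_right.of_mul_right_right

theorem stmt6_general (p q : ℤ)
    (ω : ℕ) (h : 7*q^2 + 59*p^2 = 3^ω)
    (hmod : p * q ≡ -1 [ZMOD 3])
    (x' y' : ℤ) (hx : x' = |A (-p) q|) (hy : y' = |B (-p) q|) :
    0 < x' ∧ 0 < y' ∧ Int.gcd x' y' = 1 ∧ 7*x'^2 + 59*y'^2 = 3^(2*ω + 5)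
      ∧ ¬ (3 : ℤ) ∣ x' := by
  have hnegpq : -p * q ≡ 1 [ZMOD 3] := by simpa using hmod.neg
  obtain ⟨hA, hB⟩ := A_modEq_two_and_B_modEq_two hnegpq
  unfold Int.ModEq at hA hB
  have hA3 : ¬ (3 : ℤ) ∣ x' := by
    rw [hx, dvd_abs]
    omega
  have hA0 : A (-p) q ≠ 0 := by omega
  have hB0 : B (-p) q ≠ 0 := by omega
  have heq : 7*x'^2 + 59*y'^2 = 3^(2*ω + 5) := by
    rw [hx, hy, sq_abs, sq_abs, seven_mul_A_sq_add_fiftynine_mul_B_sq, neg_sq, h]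
    ring
  have hcop3 : IsCoprime x' 3 := (Int.prime_three.irreducible.coprime_iff_not_dvd.2 hA3).symm
  exact ⟨hx ▸ abs_pos.2 hA0, hy ▸ abs_pos.2 hB0,
    Int.isCoprime_iff_gcd_eq_one.1 (hcop3.of_mul_sq_add_mul_sq_eq_pow heq), heq, hA3⟩

theorem stmt6 (p q : ℤ) (hp : p ≠ 0) (hq : q ≠ 0) (hcop : Int.gcd p q = 1)
    (ω : ℕ) (hω : 0 < ω) (h : 7*q^2 + 59*p^2 = 3^ω)
    (hmod : p * q ≡ -1 [ZMOD 3])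
    (x' y' : ℤ) (hx : x' = |A (-p) q|) (hy : y' = |B (-p) q|) :
    0 < x' ∧ 0 < y' ∧ Int.gcd x' y' = 1 ∧ 7*x'^2 + 59*y'^2 = 3^(2*ω + 5)
      ∧ ¬ (3 : ℤ) ∣ x' :=
  stmt6_general p q ω h hmod x' y' hx hy
end

section
/- The equation 7x² + 59y² = 2·3^m has no integer solution for any integer m > 0. -/
lemma key59 : ∀ (r : Fin 29) (a : ZMod 59), 7 * a^2 ≠ 2 * 3^(r:ℕ) := by decide

theorem stmt11 (x y : ℤ) (m : ℕ) (hm : 0 < m) :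
    7*x^2 + 59*y^2 ≠ 2 * 3^m := by
  intro h
  have h1 : (7 * (x:ZMod 59)^2 + 59 * (y:ZMod 59)^2) = 2 * 3^m := by
    have := congrArg (fun t : ℤ => (t : ZMod 59)) h
    push_cast at this
    exact this
  have h59 : (59 : ZMod 59) = 0 := by decide
  rw [h59, zero_mul, add_zero] at h1
  have h3 : (3 : ZMod 59)^m = 3^(m % 29) := by
    conv_lhs => rw [← Nat.div_add_mod m 29]
    rw [pow_add, pow_mul, show (3:ZMod 59)^29 = 1 from by decide, one_pow, one_mul]
  rw [h3] at h1
  exact key59 ⟨m % 29, Nat.mod_lt _ (by norm_num)⟩ x h1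
end

section
/- Let p, q be nonzero coprime integers and let δ = gcd(A(p,q), B(p,q)) > 0. Then δ divides 2·3⁵·7·59. -/
/-! The combination `2A + B = -486pq` kills the squares; feeding `pq` back into `A` gives
`N q³` and `N p³` (with `N = 2·3⁵·7·59`) as integral combinations of `A` and `B`. Hence `δ`
divides `N p³` and `N q³`, and since `p³, q³` are coprime, `δ ∣ N`. -/

theorem IsCoprime.dvd_of_dvd_mul_of_dvd_mul {R : Type*} [CommSemiring R] {a b n d : R}
    (h : IsCoprime a b) (ha : d ∣ n * a) (hb : d ∣ n * b) : d ∣ n := by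
  obtain ⟨u, v, huv⟩ := h
  have hn : n = u * (n * a) + v * (n * b) := by
    calc n = n * (u * a + v * b) := by rw [huv, mul_one]
      _ = u * (n * a) + v * (n * b) := by ring
  exact hn ▸ ha.linear_comb hb u v

section CommonDivisor

variable {d p q : ℤ} (hA : d ∣ A p q) (hB : d ∣ B p q)
include hA hB

theorem dvd_mul_pq_of_dvd_A_of_dvd_B : d ∣ 486 * (p * q) := by
  have h : 486 * (p * q) = -2 * A p q + -1 * B p q := by unfold A B; ring
  exact h ▸ hA.linear_comb hB _ _

theorem dvd_mul_q_cube_of_dvd_A_of_dvd_B : d ∣ 2 * 3 ^ 5 * 7 * 59 * q ^ 3 := by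
  have h : 2 * 3 ^ 5 * 7 * 59 * q ^ 3
      = (59 * (59 * p - 236 * q)) * (486 * (p * q)) + (-59 * 486 * q) * A p q := by
    unfold A; ring
  exact h ▸ (dvd_mul_pq_of_dvd_A_of_dvd_B hA hB).linear_comb hA _ _

theorem dvd_mul_p_cube_of_dvd_A_of_dvd_B : d ∣ 2 * 3 ^ 5 * 7 * 59 * p ^ 3 := by
  have h : 2 * 3 ^ 5 * 7 * 59 * p ^ 3
      = (7 * (236 * p + 7 * q)) * (486 * (p * q)) + (7 * 486 * p) * A p q := by
    unfold A; ring
  exact h ▸ (dvd_mul_pq_of_dvd_A_of_dvd_B hA hB).linear_comb hA _ _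

end CommonDivisor

theorem stmt12_general (p q : ℤ) (hcop : Int.gcd p q = 1) :
    (Int.gcd (A p q) (B p q) : ℤ) ∣ 2 * 3^5 * 7 * 59 := by
  have hA := Int.gcd_dvd_left (A p q) (B p q)
  have hB := Int.gcd_dvd_right (A p q) (B p q)
  have hcop3 : IsCoprime (p ^ 3) (q ^ 3) := (Int.isCoprime_iff_gcd_eq_one.mpr hcop).pow
  exact hcop3.dvd_of_dvd_mul_of_dvd_mul (dvd_mul_p_cube_of_dvd_A_of_dvd_B hA hB)
    (dvd_mul_q_cube_of_dvd_A_of_dvd_B hA hB)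

theorem stmt12 (p q : ℤ) (hp : p ≠ 0) (hq : q ≠ 0) (hcop : Int.gcd p q = 1) :
    (Int.gcd (A p q) (B p q) : ℤ) ∣ 2 * 3^5 * 7 * 59 :=
  stmt12_general p q hcop
end

section
/- Let p, q be nonzero coprime integers and let δ = gcd(A(p,q), B(p,q)) > 0. Then 7 divides δ if and only if 7 divides p, and 59 divides δ if and only if 59 divides q. -/
/-! Modulo 7 the form `B` reduces to `p²`, and modulo 59 the form `A` reduces to `-7q²`; so each
prime divides one of the two forms exactly when it divides the corresponding variable, and
in that case it divides the other form as well. -/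

theorem Prime.dvd_mul_sq_add_mul_iff {R : Type*} [CommRing R] {ℓ c x y : R} (hℓ : Prime ℓ)
    (hc : ¬ ℓ ∣ c) : ℓ ∣ c * x ^ 2 + ℓ * y ↔ ℓ ∣ x := by
  rw [dvd_add_left (dvd_mul_right ℓ y)]
  constructor
  · intro h
    exact hℓ.dvd_of_dvd_pow ((hℓ.dvd_or_dvd h).resolve_left hc)
  · intro h
    exact dvd_mul_of_dvd_right (dvd_pow h two_ne_zero) c

theorem seven_dvd_B_iff (p q : ℤ) : 7 ∣ B p q ↔ 7 ∣ p := by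
  have hB : B p q = 1 * p ^ 2 + 7 * (-17 * p ^ 2 - 2 * p * q + 2 * q ^ 2) := by unfold B; ring
  rw [hB]
  exact Prime.dvd_mul_sq_add_mul_iff (by norm_num) (by norm_num)

theorem fiftynine_dvd_A_iff (p q : ℤ) : 59 ∣ A p q ↔ 59 ∣ q := by
  have hA : A p q = -7 * q ^ 2 + 59 * (p ^ 2 - 4 * p * q) := by unfold A; ring
  rw [hA]
  exact Prime.dvd_mul_sq_add_mul_iff (by norm_num) (by norm_num)

theorem seven_dvd_A_of_dvd {p : ℤ} (q : ℤ) (h : 7 ∣ p) : 7 ∣ A p q := by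
  have hA : A p q = p * (59 * p - 236 * q) + 7 * -q ^ 2 := by unfold A; ring
  rw [hA]
  exact dvd_add (dvd_mul_of_dvd_left h _) (dvd_mul_right _ _)

theorem fiftynine_dvd_B_of_dvd (p : ℤ) {q : ℤ} (h : 59 ∣ q) : 59 ∣ B p q := by
  have hB : B p q = q * (14 * q - 14 * p) + 59 * (-2 * p ^ 2) := by unfold B; ring
  rw [hB]
  exact dvd_add (dvd_mul_of_dvd_left h _) (dvd_mul_right _ _)

theorem stmt13_general (p q : ℤ) :
    ((7 : ℤ) ∣ (Int.gcd (A p q) (B p q) : ℤ) ↔ (7 : ℤ) ∣ p) ∧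
    ((59 : ℤ) ∣ (Int.gcd (A p q) (B p q) : ℤ) ↔ (59 : ℤ) ∣ q) := by
  simp only [Int.dvd_coe_gcd_iff]
  constructor
  · rw [seven_dvd_B_iff]
    exact ⟨And.right, fun h => ⟨seven_dvd_A_of_dvd q h, h⟩⟩
  · rw [fiftynine_dvd_A_iff]
    exact ⟨And.left, fun h => ⟨h, fiftynine_dvd_B_of_dvd p h⟩⟩

theorem stmt13 (p q : ℤ) (hp : p ≠ 0) (hq : q ≠ 0) (hcop : Int.gcd p q = 1) :
    ((7 : ℤ) ∣ (Int.gcd (A p q) (B p q) : ℤ) ↔ (7 : ℤ) ∣ p) ∧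
    ((59 : ℤ) ∣ (Int.gcd (A p q) (B p q) : ℤ) ↔ (59 : ℤ) ∣ q) :=
  stmt13_general p q
end

section
/- Let X, Y be rational numbers with 7X² + 59Y² = 3, X ≠ 1/9 and Y ≠ 2/9. Then there exist nonzero coprime integers p, q with q > 0 such that X = A(p,q)/C(p,q) and Y = B(p,q)/C(p,q), where p/q equals the rational number (9Y − 2)/(9X − 1). -/
def C (p q : ℤ) : ℤ := 9 * (59*p^2 + 7*q^2)

theorem stmt14 (X Y : ℚ) (h : 7*X^2 + 59*Y^2 = 3) (hX : X ≠ 1/9) (hY : Y ≠ 2/9) :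
    ∃ p q : ℤ, p ≠ 0 ∧ 0 < q ∧ Int.gcd p q = 1 ∧
      X = (A p q : ℚ) / (C p q : ℚ) ∧ Y = (B p q : ℚ) / (C p q : ℚ) ∧
      (p : ℚ) / (q : ℚ) = (9*Y - 2) / (9*X - 1) := by
  have hx1 : 9*X - 1 ≠ 0 := by
    intro hx; apply hX; linarith [hx]
  have hy2 : 9*Y - 2 ≠ 0 := by
    intro hy; apply hY; linarith [hy]
  set t : ℚ := (9*Y - 2) / (9*X - 1) with ht_def
  have ht : t * (9*X - 1) = 9*Y - 2 := div_mul_cancel₀ _ hx1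
  have ht0 : t ≠ 0 := div_ne_zero hy2 hx1
  refine ⟨t.num, (t.den : ℤ), ?_, ?_, t.reduced, ?_, ?_, ?_⟩
  · exact_mod_cast Rat.num_ne_zero.mpr ht0
  · exact_mod_cast t.pos
  all_goals
    have hq : ((t.den : ℤ) : ℚ) ≠ 0 := by exact_mod_cast t.den_nz
    have hp : ((t.num : ℤ) : ℚ) = t * ((t.den : ℤ) : ℚ) := by
      have h0 : t = (t.num:ℚ)/(t.den:ℚ) := (Rat.num_div_den t).symm
      rw [eq_div_iff (by exact_mod_cast t.den_nz)] at h0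
      exact_mod_cast h0.symm
    have hG : (9*X-1) * (X*(9*(59*t^2+7)) - (59*t^2-236*t-7)) = 0 := by
      linear_combination 81*h + (59*(t*(9*X-1)+(9*Y-2))+236)*ht
    have hXt : X*(9*(59*t^2+7)) = 59*t^2-236*t-7 := by
      rcases mul_eq_zero.mp hG with h' | h'
      · exact absurd h' hx1
      · linarith [h']
    have hYt : Y*(9*(59*t^2+7)) = -118*t^2-14*t+14 := by
      linear_combination t*hXt - (59*t^2+7)*ht
    have hC : ((C t.num (t.den:ℤ) : ℤ) : ℚ) ≠ 0 := by
      have : (0:ℤ) < C t.num (t.den:ℤ) := by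
        have : (0:ℤ) < t.den := by exact_mod_cast t.pos
        unfold C; positivity
      exact_mod_cast this.ne'
    first
    | (rw [eq_div_iff hC]; unfold A C; push_cast;
       linear_combination ((t.den:ℚ))^2*hXt + ((531*X-59)*(((t.num:ℤ):ℚ)+t*((t.den:ℤ):ℚ))+236*((t.den:ℤ):ℚ))*hp)
    | (rw [eq_div_iff hC]; unfold B C; push_cast;
       linear_combination ((t.den:ℚ))^2*hYt + ((531*Y+118)*(((t.num:ℤ):ℚ)+t*((t.den:ℤ):ℚ))+14*((t.den:ℤ):ℚ))*hp)
    | (push_cast; rw [Rat.num_div_den])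
end

section
/- Let (x, y, z) be a primitive solution of 7x² + 59y² = 3z² with x, y nonzero, z > 0, gcd(x,y) = 1, and (x,y,z) ∉ {(1,2,9), (1,−2,9), (−1,2,9)}. Then 9x − z ≠ 0 and 9y − 2z ≠ 0. -/
/-!
If `9x = z` or `2z = 9y`, substituting into `7x² + 59y² = 3z²` leaves `y² = 4x²`, so `y = ±2x`.
Coprimality then forces `x = ±1`, and the sign condition `z > 0` leaves only the three excluded
triples.
-/

theorem Int.eq_one_or_eq_neg_one_of_gcd_mul_left_eq_one {x k : ℤ} (h : Int.gcd x (k * x) = 1) :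
    x = 1 ∨ x = -1 := by
  rw [Int.gcd_mul_left_right] at h
  exact Int.natAbs_eq_iff.mp h

section Conic

variable {x y z : ℤ}

theorem eq_two_mul_or_eq_neg_two_mul_of_sq_eq (h : y ^ 2 = 4 * x ^ 2) :
    y = 2 * x ∨ y = -(2 * x) :=
  sq_eq_sq_iff_eq_or_eq_neg.mp (by linear_combination h)

theorem Int.eq_one_or_eq_neg_one_of_sq_eq_four_mul_sq (hcop : Int.gcd x y = 1)
    (h : y ^ 2 = 4 * x ^ 2) : x = 1 ∨ x = -1 := by
  rcases eq_two_mul_or_eq_neg_two_mul_of_sq_eq h with rfl | rfl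
  · exact Int.eq_one_or_eq_neg_one_of_gcd_mul_left_eq_one hcop
  · rw [neg_mul_eq_neg_mul] at hcop
    exact Int.eq_one_or_eq_neg_one_of_gcd_mul_left_eq_one hcop

variable (h : 7 * x ^ 2 + 59 * y ^ 2 = 3 * z ^ 2)
include h

theorem sq_eq_four_mul_sq_of_eq_nine_mul_left (he : z = 9 * x) : y ^ 2 = 4 * x ^ 2 := by
  subst he
  exact mul_left_cancel₀ (by norm_num : (59 : ℤ) ≠ 0) (by linear_combination h)

theorem sq_eq_four_mul_sq_of_two_mul_eq_nine_mul_right (he : 2 * z = 9 * y) :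
    y ^ 2 = 4 * x ^ 2 := by
  exact mul_left_cancel₀ (by norm_num : (7 : ℤ) ≠ 0)
    (by linear_combination -4 * h - 3 * (2 * z + 9 * y) * he)

end Conic

theorem stmt15_general (x y z : ℤ) (hz : 0 < z)
    (hcop : Int.gcd x y = 1) (h : 7*x^2 + 59*y^2 = 3*z^2)
    (h1 : (x, y, z) ≠ (1, 2, 9)) (h2 : (x, y, z) ≠ (1, -2, 9))
    (h3 : (x, y, z) ≠ (-1, 2, 9)) :
    9*x - z ≠ 0 ∧ 9*y - 2*z ≠ 0 := by
  simp only [ne_eq, Prod.mk.injEq, not_and] at h1 h2 h3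
  constructor
  · intro he
    have hzx : z = 9 * x := by linarith
    have hyx := sq_eq_four_mul_sq_of_eq_nine_mul_left h hzx
    rcases Int.eq_one_or_eq_neg_one_of_sq_eq_four_mul_sq hcop hyx with rfl | rfl <;>
      rcases eq_two_mul_or_eq_neg_two_mul_of_sq_eq hyx with rfl | rfl <;> omega
  · intro he
    have hzy : 2 * z = 9 * y := by linarith
    have hyx := sq_eq_four_mul_sq_of_two_mul_eq_nine_mul_right h hzy
    rcases Int.eq_one_or_eq_neg_one_of_sq_eq_four_mul_sq hcop hyx with rfl | rfl <;>
      rcases eq_two_mul_or_eq_neg_two_mul_of_sq_eq hyx with rfl | rfl <;> omega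

theorem stmt15 (x y z : ℤ) (hx : x ≠ 0) (hy : y ≠ 0) (hz : 0 < z)
    (hcop : Int.gcd x y = 1) (h : 7*x^2 + 59*y^2 = 3*z^2)
    (h1 : (x, y, z) ≠ (1, 2, 9)) (h2 : (x, y, z) ≠ (1, -2, 9))
    (h3 : (x, y, z) ≠ (-1, 2, 9)) :
    9*x - z ≠ 0 ∧ 9*y - 2*z ≠ 0 :=
  stmt15_general x y z hz hcop h h1 h2 h3
end

section
/- Let (x, y, z) be a primitive solution of 7x² + 59y² = 3z² with z > 0 and (x,y,z) ∉ {(1,2,9),(1,−2,9),(−1,2,9)}. Write the incidence I = (9y − 2z)/(9x − z) in lowest terms as p/q with q > 0, and let δ = gcd(A(p,q), B(p,q)) > 0. Then x = A(p,q)/δ, y = B(p,q)/δ, and z = C(p,q)/δ, and δ divides 2·3⁵·7·59. -/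
/-!
The linear forms 9Y − 2Z and 9X − Z vanish at the rational point (1 : 2 : 9) of the conic
7X² + 59Y² = 3Z², so the incidence p/q names the line through (1 : 2 : 9) and (x : y : z), and
(A : B : C)(p, q) is the second intersection of that line with the conic. Hence (A, B, C)(p, q) is
an integer multiple t of the primitive vector (x, y, z), with t > 0 because C(p, q) > 0. Finally
2·3⁵·7·59·p³ and 2·3⁵·7·59·q³ lie in the ideal (A(p, q), B(p, q)), so t ∣ 2·3⁵·7·59 as p, q are
coprime.
-/

theorem IsCoprime.exists_eq_mul_of_cross_eq_zero {R : Type*} [CommRing R] {x y z a b c : R}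
    (hxy : IsCoprime x y) (hab : a * y = b * x) (hac : a * z = c * x) (hbc : b * z = c * y) :
    ∃ t, a = t * x ∧ b = t * y ∧ c = t * z := by
  obtain ⟨u, v, huv⟩ := hxy
  refine ⟨a * u + b * v, ?_, ?_, ?_⟩
  · linear_combination (-a) * huv + v * hab
  · linear_combination (-b) * huv - u * hab
  · linear_combination (-c) * huv - u * hac - v * hbc

section Conic

variable {x y z p q : ℤ}

theorem eq_one_two_nine_of_eq_nine_mul (hz : 0 < z) (hcop : Int.gcd x y = 1)
    (h : 7*x^2 + 59*y^2 = 3*z^2) (hzx : z = 9*x) :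
    (x, y, z) = (1, 2, 9) ∨ (x, y, z) = (1, -2, 9) := by
  subst hzx
  have hy : (y - 2*x) * (y + 2*x) = 0 :=
    mul_left_cancel₀ (by norm_num : (59 : ℤ) ≠ 0) (by linear_combination h)
  obtain rfl | rfl : y = 2*x ∨ y = -2*x := by
    rcases mul_eq_zero.mp hy with hy | hy
    exacts [Or.inl (by linarith), Or.inr (by linarith)]
  all_goals
    have hx : x.natAbs = 1 := by simpa using hcop
    simp only [Prod.mk.injEq]
    omega

variable (hE : q * (9*y - 2*z) = p * (9*x - z)) (h : 7*x^2 + 59*y^2 = 3*z^2)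
  (hD : 9*x - z ≠ 0)
include hE h hD

theorem A_mul_eq_B_mul : A p q * y = B p q * x :=
  mul_left_cancel₀ hD <| by
    unfold A B
    linear_combination (-118*p*x - 59*p*y - 7*q*x + 118*q*y + 27*q*z) * hE + (9*p*q - 18*q^2) * h

theorem A_mul_eq_C_mul : A p q * z = C p q * x :=
  mul_left_cancel₀ hD <| by
    unfold A C
    linear_combination (531*p*x - 59*p*z + 531*q*y + 118*q*z) * hE - 81*q^2 * h

theorem B_mul_eq_C_mul : B p q * z = C p q * y :=
  mul_left_cancel₀ hD <| by
    unfold B C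
    linear_combination (531*p*y + 118*p*z - 63*q*x + 7*q*z) * hE - 81*p*q * h

end Conic

theorem dvd_of_dvd_A_of_dvd_B {p q d : ℤ} (hpq : IsCoprime p q) (hA : d ∣ A p q)
    (hB : d ∣ B p q) : d ∣ 2 * 3^5 * 7 * 59 := by
  have hp : d ∣ 2 * 3^5 * 7 * 59 * p^3 := by
    have : 2 * 3^5 * 7 * 59 * p^3 = (98*p - 98*q) * A p q + (-1652*p - 49*q) * B p q := by
      unfold A B; ring
    exact this ▸ hA.linear_comb hB _ _
  have hq : d ∣ 2 * 3^5 * 7 * 59 * q^3 := by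
    have : 2 * 3^5 * 7 * 59 * q^3 = (-6962*p - 826*q) * A p q + (-3481*p + 13924*q) * B p q := by
      unfold A B; ring
    exact this ▸ hA.linear_comb hB _ _
  obtain ⟨u, v, huv⟩ := hpq.pow (m := 3) (n := 3)
  have : (2 * 3^5 * 7 * 59 : ℤ) = u * (2 * 3^5 * 7 * 59 * p^3) + v * (2 * 3^5 * 7 * 59 * q^3) := by
    linear_combination (-2 * 3^5 * 7 * 59 : ℤ) * huv
  exact this ▸ hp.linear_comb hq u v

theorem stmt16_general (x y z : ℤ) (hz : 0 < z)
    (hcop : Int.gcd x y = 1) (h : 7*x^2 + 59*y^2 = 3*z^2)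
    (h1 : (x, y, z) ≠ (1, 2, 9)) (h2 : (x, y, z) ≠ (1, -2, 9))
    (p q : ℤ) (hq : 0 < q) (hpq : Int.gcd p q = 1)
    (hinc : (p : ℚ) / (q : ℚ) = ((9*y - 2*z : ℤ) : ℚ) / ((9*x - z : ℤ) : ℚ)) :
    A p q = (Int.gcd (A p q) (B p q) : ℤ) * x ∧
    B p q = (Int.gcd (A p q) (B p q) : ℤ) * y ∧
    C p q = (Int.gcd (A p q) (B p q) : ℤ) * z ∧
    (Int.gcd (A p q) (B p q) : ℤ) ∣ 2 * 3^5 * 7 * 59 := by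
  have hD : 9*x - z ≠ 0 := fun hD ↦ by
    rcases eq_one_two_nine_of_eq_nine_mul hz hcop h (by linarith) with h' | h'
    exacts [h1 h', h2 h']
  have hE : q * (9*y - 2*z) = p * (9*x - z) := by
    have := (div_eq_div_iff (by positivity) (by exact_mod_cast hD)).mp hinc
    rw [mul_comm q]
    exact_mod_cast this.symm
  obtain ⟨t, hA, hB, hC⟩ := (Int.isCoprime_iff_gcd_eq_one.mpr hcop).exists_eq_mul_of_cross_eq_zero
    (A_mul_eq_B_mul hE h hD) (A_mul_eq_C_mul hE h hD) (B_mul_eq_C_mul hE h hD)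
  have ht : 0 < t := pos_of_mul_pos_left (hC ▸ by unfold C; positivity) hz.le
  have hgcd : (Int.gcd (A p q) (B p q) : ℤ) = t := by
    rw [hA, hB, Int.gcd_mul_left, hcop, mul_one, Int.natCast_natAbs, abs_of_pos ht]
  rw [hgcd]
  exact ⟨hA, hB, hC, dvd_of_dvd_A_of_dvd_B (Int.isCoprime_iff_gcd_eq_one.mpr hpq)
    (hA ▸ dvd_mul_right t x) (hB ▸ dvd_mul_right t y)⟩

theorem stmt16 (x y z : ℤ) (hx : x ≠ 0) (hy : y ≠ 0) (hz : 0 < z)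
    (hcop : Int.gcd x y = 1) (h : 7*x^2 + 59*y^2 = 3*z^2)
    (h1 : (x, y, z) ≠ (1, 2, 9)) (h2 : (x, y, z) ≠ (1, -2, 9))
    (h3 : (x, y, z) ≠ (-1, 2, 9))
    (p q : ℤ) (hq : 0 < q) (hpq : Int.gcd p q = 1)
    (hinc : (p : ℚ) / (q : ℚ) = ((9*y - 2*z : ℤ) : ℚ) / ((9*x - z : ℤ) : ℚ)) :
    A p q = (Int.gcd (A p q) (B p q) : ℤ) * x ∧
    B p q = (Int.gcd (A p q) (B p q) : ℤ) * y ∧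
    C p q = (Int.gcd (A p q) (B p q) : ℤ) * z ∧
    (Int.gcd (A p q) (B p q) : ℤ) ∣ 2 * 3^5 * 7 * 59 :=
  stmt16_general x y z hz hcop h h1 h2 p q hq hpq hinc
end

section
/- There exist infinitely many pairs of coprime positive integers (x, y) such that 7x² + 59y² is a power of 3; equivalently, for every natural number N there exists m > N and coprime positive integers x, y with 7x² + 59y² = 3^m. -/
lemma key19 (n : ℕ) (a b : ℤ) (h7 : 7*a^2 + 59*b^2 = 3^n) (h3 : ¬ (3:ℤ) ∣ a) :
    ∃ x y : ℕ, 0 < x ∧ 0 < y ∧ Nat.gcd x y = 1 ∧ 7*x^2 + 59*y^2 = 3^n := by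
  have hsq : ∀ c : ℤ, ((c.natAbs : ℤ))^2 = c^2 := by
    intro c; rw [← Int.abs_eq_natAbs, sq_abs]
  have heq : 7*a.natAbs^2 + 59*b.natAbs^2 = 3^n := by
    have : ((7*a.natAbs^2 + 59*b.natAbs^2 : ℕ) : ℤ) = ((3^n : ℕ) : ℤ) := by
      push_cast
      rw [sq_abs, sq_abs, h7]
    exact Nat.cast_injective this
  have h3x : ¬ 3 ∣ a.natAbs := by
    intro h
    exact h3 ((Int.natAbs_dvd_natAbs (a := 3) (b := a)).mp h)
  refine ⟨a.natAbs, b.natAbs, ?_, ?_, ?_, heq⟩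
  · have : a ≠ 0 := by rintro rfl; exact h3 (dvd_zero 3)
    exact Nat.pos_of_ne_zero (Int.natAbs_ne_zero.mpr this)
  · rcases Nat.eq_zero_or_pos b.natAbs with h0 | h; swap
    · exact h
    · exfalso
      rw [h0] at heq
      have h7d : 7 ∣ 3^n := ⟨a.natAbs^2, by omega⟩
      have := Nat.Prime.dvd_of_dvd_pow (p := 7) (by norm_num) h7d
      norm_num at this
  · set d := Nat.gcd a.natAbs b.natAbs with hd
    have hdx : d ∣ a.natAbs := Nat.gcd_dvd_left _ _
    have hdy : d ∣ b.natAbs := Nat.gcd_dvd_right _ _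
    have hd2 : d^2 ∣ 3^n := by
      rw [← heq]
      exact Dvd.dvd.add (Dvd.dvd.mul_left (pow_dvd_pow_of_dvd hdx 2) 7)
        (Dvd.dvd.mul_left (pow_dvd_pow_of_dvd hdy 2) 59)
    have hdp : d ∣ 3^n := (dvd_pow_self d (by norm_num : (2:ℕ) ≠ 0)).trans hd2
    obtain ⟨j, hj, hdj⟩ := (Nat.dvd_prime_pow (by norm_num : Nat.Prime 3)).mp hdp
    rcases Nat.eq_zero_or_pos j with rfl | hjpos
    · simpa using hdj
    · exfalso
      have : 3 ∣ d := hdj ▸ dvd_pow_self 3 hjpos.ne'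
      exact h3x (this.trans hdx)

lemma step19 (m x y : ℕ) (hx : 0 < x) (hy : 0 < y) (hg : Nat.gcd x y = 1)
    (he : 7*x^2 + 59*y^2 = 3^m) :
    ∃ x' y' : ℕ, 0 < x' ∧ 0 < y' ∧ Nat.gcd x' y' = 1 ∧ 7*x'^2 + 59*y'^2 = 3^(m+10) := by
  have hm0 : m ≠ 0 := by
    rintro rfl
    nlinarith [sq_nonneg x, sq_nonneg y, Nat.one_le_iff_ne_zero.mpr hx.ne',
      Nat.one_le_iff_ne_zero.mpr hy.ne']
  have h3m : 3 ∣ 3^m := dvd_pow_self 3 hm0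
  have h3e : 3 ∣ 7*x^2 + 59*y^2 := he ▸ h3m
  have h3x : ¬ 3 ∣ x := by
    intro h
    have hx2 : 3 ∣ 7*x^2 := Dvd.dvd.mul_left (dvd_pow h (by norm_num)) 7
    have hy2 : 3 ∣ 59*y^2 := (Nat.dvd_add_right hx2).mp h3e
    have : 3 ∣ y := by
      rcases (Nat.Prime.dvd_mul (by norm_num)).mp hy2 with h' | h'
      · norm_num at h'
      · exact Nat.Prime.dvd_of_dvd_pow (by norm_num) h'
    have := Nat.dvd_gcd h this
    rw [hg] at this
    norm_num at this
  have h3y : ¬ 3 ∣ y := by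
    intro h
    have hy2 : 3 ∣ 59*y^2 := Dvd.dvd.mul_left (dvd_pow h (by norm_num)) 59
    have hx2 : 3 ∣ 7*x^2 := (Nat.dvd_add_iff_left hy2).mpr h3e
    have : 3 ∣ x := by
      rcases (Nat.Prime.dvd_mul (by norm_num)).mp hx2 with h' | h'
      · norm_num at h'
      · exact Nat.Prime.dvd_of_dvd_pow (by norm_num) h'
    exact h3x this
  have heZ : 7*(x:ℤ)^2 + 59*(y:ℤ)^2 = 3^m := by exact_mod_cast he
  have hpow : (3:ℤ)^(m+10) = 59049 * 3^m := by
    rw [pow_add]; ring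
  have hdis : 3 ∣ x + y ∨ 3 ∣ x + 2*y := by
    have h1 : x % 3 = 1 ∨ x % 3 = 2 := by omega
    have h2 : y % 3 = 1 ∨ y % 3 = 2 := by omega
    rcases h1 with h1 | h1 <;> rcases h2 with h2 | h2
    · exact Or.inr ⟨x/3 + 2*(y/3) + 1, by omega⟩
    · exact Or.inl ⟨x/3 + y/3 + 1, by omega⟩
    · exact Or.inl ⟨x/3 + y/3 + 1, by omega⟩
    · exact Or.inr ⟨x/3 + 2*(y/3) + 2, by omega⟩
  rcases hdis with hc | hc
  · -- ¬ 3 ∣ x + 2*y, use a = 229x + 236y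
    have hnc : ¬ 3 ∣ x + 2*y := by omega
    have h7 : 7*(229*(x:ℤ) + 236*y)^2 + 59*(229*(y:ℤ) - 28*x)^2 = 3^(m+10) := by
      rw [hpow]; nlinarith [heZ]
    refine key19 (m+10) _ _ h7 ?_
    intro hdvd
    have : (3:ℤ) ∣ ((x:ℤ) + 2*y) := by omega
    exact hnc (by exact_mod_cast this)
  · -- ¬ 3 ∣ x + y, use a = 229x - 236y
    have hnc : ¬ 3 ∣ x + y := by omega
    have h7 : 7*(229*(x:ℤ) - 236*y)^2 + 59*(229*(y:ℤ) + 28*x)^2 = 3^(m+10) := by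
      rw [hpow]; nlinarith [heZ]
    refine key19 (m+10) _ _ h7 ?_
    intro hdvd
    have : (3:ℤ) ∣ ((x:ℤ) + y) := by omega
    exact hnc (by exact_mod_cast this)

lemma aux19 : ∀ k : ℕ, ∃ x y : ℕ, 0 < x ∧ 0 < y ∧ Nat.gcd x y = 1 ∧
    7*x^2 + 59*y^2 = 3^(5 + 10*k) := by
  intro k
  induction k with
  | zero => exact ⟨1, 2, by norm_num, by norm_num, by norm_num, by norm_num⟩
  | succ n ih =>
    obtain ⟨x, y, hx, hy, hg, he⟩ := ih
    obtain ⟨x', y', hx', hy', hg', he'⟩ := step19 _ x y hx hy hg he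
    refine ⟨x', y', hx', hy', hg', ?_⟩
    have : 5 + 10*n + 10 = 5 + 10*(n+1) := by ring
    rw [← this]
    exact he'

theorem stmt19 : ∀ N : ℕ, ∃ m x y : ℕ, N < m ∧ 0 < x ∧ 0 < y ∧
    Nat.gcd x y = 1 ∧ 7*x^2 + 59*y^2 = 3^m := by
  intro N
  obtain ⟨x, y, hx, hy, hg, he⟩ := aux19 N
  exact ⟨5 + 10*N, x, y, by omega, hx, hy, hg, he⟩
end
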